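/- arXiv:1710.07657 — 3 statements merged into one kernel-verified Lean document; each statement's English description precedes it below -/
import Mathlib

section
/- Let t_f > t₀, suppose the controllability Gramian W(t_f) is invertible, and let x_f ∈ ℝⁿ. If a continuous control u : [t₀, t_f] → ℝᵐ steers the system from x₀ at t₀ to x_f at t_f (i.e., g(t_f) + ∫_{t₀}^{t_f} e^{A(t_f−τ)} B u(τ) dτ = x_f) and its energy attains the minimum value, ∫_{t₀}^{t_f} ‖u(t)‖² dt = (x_f − g(t_f))ᵀ W(t_f)⁻¹ (x_f − g(t_f)), then u coincides with the minimum-energy control: u(t) = Bᵀ e^{Aᵀ(t_f−t)} W(t_f)⁻¹ (x_f − g(t_f)) for every t ∈ [t₀, t_f]. -/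
/-! With `c = W(t_f)⁻¹ (x_f - g(t_f))` and `N(τ) = e^{A(t_f-τ)} B`, the candidate control is
`v(τ) = N(τ)ᵀ c`. Moving `N(τ)ᵀ` across the dot product under the integral turns the reachability
condition into `∫ v ⬝ u = cᵀ (x_f - g(t_f))` and the definition of the Gramian into
`∫ v ⬝ v = cᵀ W(t_f) c = cᵀ (x_f - g(t_f))`; the energy hypothesis says `∫ u ⬝ u` is the same
number. Hence `∫ |u - v|² = 0`, and continuity forces `u = v` on `[t₀, t_f]`. -/

open Matrix MeasureTheory

attribute [local instance] Matrix.normedAddCommGroup Matrix.normedSpace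

open Set

theorem Matrix.exp_continuous {ι : Type*} [Fintype ι] [DecidableEq ι] :
    Continuous (NormedSpace.exp : Matrix ι ι ℝ → Matrix ι ι ℝ) := by
  -- borrow the L∞ operator norm: a normed-algebra structure inducing the product topology
  let : NormedRing (Matrix ι ι ℝ) := Matrix.linftyOpNormedRing
  let : NormedAlgebra ℝ (Matrix ι ι ℝ) := Matrix.linftyOpNormedAlgebra
  let : NormedAlgebra ℚ (Matrix ι ι ℝ) := NormedAlgebra.restrictScalars ℚ ℝ _
  have : @CompleteSpace (Matrix ι ι ℝ)
      (Matrix.linftyOpNormedRing (n := ι) (α := ℝ)).toUniformSpace :=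
    @FiniteDimensional.complete ℝ (Matrix ι ι ℝ) _ _ _ _ _ _ _ _ _
  exact NormedSpace.exp_continuous

theorem LinearMap.intervalIntegral_comp_comm {E F : Type*}
    [NormedAddCommGroup E] [NormedSpace ℝ E] [FiniteDimensional ℝ E]
    [NormedAddCommGroup F] [NormedSpace ℝ F] [FiniteDimensional ℝ F]
    (L : E →ₗ[ℝ] F) {f : ℝ → E} {a b : ℝ} (hf : IntervalIntegrable f volume a b) :
    ∫ x in a..b, L (f x) = L (∫ x in a..b, f x) :=
  L.toContinuousLinearMap.intervalIntegral_comp_comm hf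

section

variable {ι κ : Type*} [Fintype ι] [Fintype κ] {a b : ℝ}

theorem dotProduct_intervalIntegral (c : ι → ℝ) {F : ℝ → ι → ℝ}
    (hF : IntervalIntegrable F volume a b) :
    c ⬝ᵥ ∫ τ in a..b, F τ = ∫ τ in a..b, c ⬝ᵥ F τ :=
  ((dotProductBilin ℝ ℝ c).intervalIntegral_comp_comm hF).symm

theorem intervalIntegral_mulVec {M : ℝ → Matrix ι κ ℝ} (hM : Continuous M) (x : κ → ℝ) :
    (∫ τ in a..b, M τ) *ᵥ x = ∫ τ in a..b, M τ *ᵥ x :=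
  (((mulVecBilin ℝ ℝ).flip x).intervalIntegral_comp_comm (hM.intervalIntegrable _ _)).symm

theorem dotProduct_intervalIntegral_mulVec {N : ℝ → Matrix ι κ ℝ} {u : ℝ → κ → ℝ}
    (hNu : IntervalIntegrable (fun τ => N τ *ᵥ u τ) volume a b) (c : ι → ℝ) :
    c ⬝ᵥ ∫ τ in a..b, N τ *ᵥ u τ = ∫ τ in a..b, (N τ)ᵀ *ᵥ c ⬝ᵥ u τ := by
  simp only [dotProduct_intervalIntegral c hNu, mulVec_transpose, dotProduct_mulVec]

theorem dotProduct_intervalIntegral_mul_transpose_mulVec {N : ℝ → Matrix ι κ ℝ}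
    (hN : Continuous N) (c : ι → ℝ) :
    c ⬝ᵥ (∫ τ in a..b, N τ * (N τ)ᵀ) *ᵥ c
      = ∫ τ in a..b, (N τ)ᵀ *ᵥ c ⬝ᵥ (N τ)ᵀ *ᵥ c := by
  rw [intervalIntegral_mulVec (hN.matrix_mul hN.matrix_transpose),
    dotProduct_intervalIntegral c
      (((hN.matrix_mul hN.matrix_transpose).matrix_mulVec continuous_const).intervalIntegrable _ _)]
  simp only [← mulVec_mulVec, dotProduct_mulVec, ← mulVec_transpose]

theorem eqOn_zero_of_intervalIntegral_dotProduct_self_eq_zero (hab : a < b)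
    {w : ℝ → κ → ℝ} (hw : Continuous w) (h : ∫ τ in a..b, w τ ⬝ᵥ w τ = 0) :
    EqOn w 0 (Icc a b) := by
  have hnonneg : ∀ τ, 0 ≤ w τ ⬝ᵥ w τ := fun τ => Finset.sum_nonneg fun k _ => mul_self_nonneg _
  intro t ht
  by_contra hne
  have hpos : 0 < ∫ τ in a..b, w τ ⬝ᵥ w τ :=
    intervalIntegral.integral_pos hab (hw.dotProduct hw).continuousOn (fun τ _ => hnonneg τ)
      ⟨t, ht, (hnonneg t).lt_of_ne fun h0 => hne (dotProduct_self_eq_zero.mp h0.symm)⟩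
  exact hpos.ne' h

theorem eqOn_of_intervalIntegral_dotProduct_eq (hab : a < b) {u v : ℝ → κ → ℝ}
    (hu : Continuous u) (hv : Continuous v)
    (huu : ∫ τ in a..b, u τ ⬝ᵥ u τ = ∫ τ in a..b, v τ ⬝ᵥ u τ)
    (hvv : ∫ τ in a..b, v τ ⬝ᵥ v τ = ∫ τ in a..b, v τ ⬝ᵥ u τ) :
    EqOn u v (Icc a b) := by
  have hdot : ∀ {f g : ℝ → κ → ℝ}, Continuous f → Continuous g →
      IntervalIntegrable (fun τ => f τ ⬝ᵥ g τ) volume a b :=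
    fun hf hg => (hf.dotProduct hg).intervalIntegrable _ _
  have hexpand : ∀ τ, (u τ - v τ) ⬝ᵥ (u τ - v τ)
      = u τ ⬝ᵥ u τ - 2 * (v τ ⬝ᵥ u τ) + v τ ⬝ᵥ v τ := fun τ => by
    simp only [sub_dotProduct, dotProduct_sub, dotProduct_comm (u τ) (v τ)]
    ring
  have hzero : ∫ τ in a..b, (u τ - v τ) ⬝ᵥ (u τ - v τ) = 0 := by
    simp only [hexpand]
    rw [intervalIntegral.integral_add ((hdot hu hu).sub ((hdot hv hu).const_mul 2)) (hdot hv hv),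
      intervalIntegral.integral_sub (hdot hu hu) ((hdot hv hu).const_mul 2),
      intervalIntegral.integral_const_mul, huu, hvv]
    ring
  intro t ht
  exact sub_eq_zero.mp
    (eqOn_zero_of_intervalIntegral_dotProduct_self_eq_zero hab (hu.sub hv) hzero ht)

end

theorem minimum_energy_control_unique_general
    (n m : ℕ) (A : Matrix (Fin n) (Fin n) ℝ) (B : Matrix (Fin n) (Fin m) ℝ)
    (t₀ : ℝ)
    (g : ℝ → Fin n → ℝ)
    (W : ℝ → Matrix (Fin n) (Fin n) ℝ)
    (hW : ∀ t, W t = ∫ τ in t₀..t,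
        NormedSpace.exp ((t - τ) • A) * B * Bᵀ * NormedSpace.exp ((t - τ) • Aᵀ))
    (tf : ℝ) (htf : t₀ < tf)
    (hinv : IsUnit (W tf).det)
    (xf : Fin n → ℝ)
    (u : ℝ → Fin m → ℝ) (hu : Continuous u)
    (hreach : g tf
        + (∫ τ in t₀..tf, (NormedSpace.exp ((tf - τ) • A)).mulVec (B.mulVec (u τ)))
        = xf)
    (henergy : (∫ t in t₀..tf, ∑ k, (u t k) ^ 2)
        = (xf - g tf) ⬝ᵥ (W tf)⁻¹.mulVec (xf - g tf)) :
    ∀ t ∈ Set.Icc t₀ tf,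
      u t = Bᵀ.mulVec ((NormedSpace.exp ((tf - t) • Aᵀ)).mulVec
        ((W tf)⁻¹.mulVec (xf - g tf))) := by
  set d := xf - g tf
  set c := (W tf)⁻¹ *ᵥ d
  set N : ℝ → Matrix (Fin n) (Fin m) ℝ := fun τ => NormedSpace.exp ((tf - τ) • A) * B
  have hN : Continuous N := (Matrix.exp_continuous.comp (by fun_prop)).matrix_mul continuous_const
  have hNt : ∀ τ, (N τ)ᵀ *ᵥ c = Bᵀ *ᵥ NormedSpace.exp ((tf - τ) • Aᵀ) *ᵥ c := fun τ => by
    rw [transpose_mul, ← mulVec_mulVec, ← transpose_smul, exp_transpose]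
  have hsteer : ∫ τ in t₀..tf, N τ *ᵥ u τ = d := by
    simp only [d, ← hreach, N, ← mulVec_mulVec, add_sub_cancel_left]
  have hgram : ∫ τ in t₀..tf, N τ * (N τ)ᵀ = W tf := by
    simp only [hW, N, transpose_mul, ← exp_transpose, transpose_smul, Matrix.mul_assoc]
  have hcross : ∫ τ in t₀..tf, (N τ)ᵀ *ᵥ c ⬝ᵥ u τ = d ⬝ᵥ c := by
    rw [← dotProduct_intervalIntegral_mulVec ((hN.matrix_mulVec hu).intervalIntegrable _ _),
      hsteer, dotProduct_comm]
  have hquad : ∫ τ in t₀..tf, (N τ)ᵀ *ᵥ c ⬝ᵥ (N τ)ᵀ *ᵥ c = d ⬝ᵥ c := by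
    rw [← dotProduct_intervalIntegral_mul_transpose_mulVec hN, hgram, mulVec_mulVec,
      mul_nonsing_inv _ hinv, one_mulVec, dotProduct_comm]
  have henergy' : ∫ τ in t₀..tf, u τ ⬝ᵥ u τ = d ⬝ᵥ c := by
    simpa only [dotProduct, sq] using henergy
  intro t ht
  rw [eqOn_of_intervalIntegral_dotProduct_eq htf hu
    (hN.matrix_transpose.matrix_mulVec continuous_const)
    (henergy'.trans hcross.symm) (hquad.trans hcross.symm) ht]
  exact hNt t

/-- If `t_f > t₀`, `W(t_f)` is invertible, and a continuous control `u`
steers the system from `x₀` at `t₀` to `x_f` at `t_f` with energy attaining the minimum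
value `(x_f − g(t_f))ᵀ W(t_f)⁻¹ (x_f − g(t_f))`, then `u` coincides with the
minimum-energy control: `u(t) = Bᵀ e^{Aᵀ(t_f−t)} W(t_f)⁻¹ (x_f − g(t_f))` for every
`t ∈ [t₀, t_f]`. -/
theorem minimum_energy_control_unique
    (n m : ℕ) (A : Matrix (Fin n) (Fin n) ℝ) (B : Matrix (Fin n) (Fin m) ℝ)
    (f x₀ : Fin n → ℝ) (t₀ : ℝ)
    (g : ℝ → Fin n → ℝ)
    (hg : ∀ t, g t = (NormedSpace.exp ((t - t₀) • A)).mulVec x₀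
        + ∫ τ in t₀..t, (NormedSpace.exp ((t - τ) • A)).mulVec f)
    (W : ℝ → Matrix (Fin n) (Fin n) ℝ)
    (hW : ∀ t, W t = ∫ τ in t₀..t,
        NormedSpace.exp ((t - τ) • A) * B * Bᵀ * NormedSpace.exp ((t - τ) • Aᵀ))
    (tf : ℝ) (htf : t₀ < tf)
    (hinv : IsUnit (W tf).det)
    (xf : Fin n → ℝ)
    (u : ℝ → Fin m → ℝ) (hu : Continuous u)
    (hreach : g tf
        + (∫ τ in t₀..tf, (NormedSpace.exp ((tf - τ) • A)).mulVec (B.mulVec (u τ)))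
        = xf)
    (henergy : (∫ t in t₀..tf, ∑ k, (u t k) ^ 2)
        = (xf - g tf) ⬝ᵥ (W tf)⁻¹.mulVec (xf - g tf)) :
    ∀ t ∈ Set.Icc t₀ tf,
      u t = Bᵀ.mulVec ((NormedSpace.exp ((tf - t) • Aᵀ)).mulVec
        ((W tf)⁻¹.mulVec (xf - g tf))) :=
  minimum_energy_control_unique_general n m A B t₀ g W hW tf htf hinv xf u hu hreach henergy
end

section
/- Let t_f > t₀, suppose W(t_f) is invertible, let x_f ∈ ℝⁿ, and let u*(t) = Bᵀ e^{Aᵀ(t_f−t)} W(t_f)⁻¹ (x_f − g(t_f)) be the minimum-energy control with trajectory x(t) = g(t) + ∫_{t₀}^{t} e^{A(t−τ)} B u*(τ) dτ and cumulative energy E(t) = ∫_{t₀}^{t} ‖u*(s)‖² ds. Then for every intermediate time t ∈ (t₀, t_f] at which W(t) is invertible, the state lies on the time-varying energy hyper-ellipsoid: (x(t) − g(t))ᵀ W(t)⁻¹ (x(t) − g(t)) = E(t). -/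
/-!
Fix `t` and put `Φ τ = e^{A(t-τ)} B`, so that `W t = ∫_{t₀}^{t} Φ Φᵀ`. Splitting
`e^{Aᵀ(t_f-τ)} = e^{Aᵀ(t-τ)} e^{Aᵀ(t_f-t)}` shows that on `[t₀, t]` the minimum-energy control is
`u*(τ) = Φ(τ)ᵀ v` for the single vector `v = e^{Aᵀ(t_f-t)} W(t_f)⁻¹ (x_f - g(t_f))`. Hence
`x t - g t = ∫ Φ Φᵀ v = W(t) v` and `E t = ∫ ‖Φᵀ v‖² = vᵀ W(t) v`, while
`(W v)ᵀ W⁻¹ (W v) = vᵀ W v`.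
-/

open Matrix MeasureTheory

attribute [local instance] Matrix.normedAddCommGroup Matrix.normedSpace

namespace Matrix

variable {ι κ : Type*} [Fintype ι] [Fintype κ]

section Exponential

variable [DecidableEq ι]

theorem continuous_exp_smul (A : Matrix ι ι ℝ) :
    Continuous fun s : ℝ => NormedSpace.exp (s • A) := by
  -- `Matrix.normedAddCommGroup` is not a ring norm; the ℓ∞ operator norm induces the same topology.
  let _ : NormedRing (Matrix ι ι ℝ) := Matrix.linftyOpNormedRing
  let _ : NormedAlgebra ℝ (Matrix ι ι ℝ) := Matrix.linftyOpNormedAlgebra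
  let _ : NormedAlgebra ℚ (Matrix ι ι ℝ) := NormedAlgebra.restrictScalars ℚ ℝ _
  have : @CompleteSpace (Matrix ι ι ℝ) PseudoMetricSpace.toUniformSpace :=
    FiniteDimensional.complete ℝ _
  exact NormedSpace.exp_continuous.comp (continuous_id.smul continuous_const)

theorem exp_add_smul (A : Matrix ι ι ℝ) (s r : ℝ) :
    NormedSpace.exp ((s + r) • A) = NormedSpace.exp (s • A) * NormedSpace.exp (r • A) := by
  rw [add_smul, exp_add_of_commute _ _ (((Commute.refl A).smul_left _).smul_right _)]

theorem exp_smul_transpose (A : Matrix ι ι ℝ) (r : ℝ) :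
    NormedSpace.exp (r • Aᵀ) = (NormedSpace.exp (r • A))ᵀ := by
  rw [← transpose_smul, exp_transpose]

end Exponential

theorem intervalIntegral_dotProduct_mulVec {F : ℝ → Matrix ι κ ℝ} {a b : ℝ}
    (hF : Continuous F) (v : ι → ℝ) (w : κ → ℝ) :
    ∫ τ in a..b, v ⬝ᵥ F τ *ᵥ w = v ⬝ᵥ (∫ τ in a..b, F τ) *ᵥ w :=
  (LinearMap.toContinuousLinearMap
    (dotProductBilin ℝ ℝ v ∘ₗ (mulVecBilin ℝ ℝ).flip w)).intervalIntegral_comp_comm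
    (hF.intervalIntegrable a b)

theorem intervalIntegral_mulVec {F : ℝ → Matrix ι κ ℝ} {a b : ℝ}
    (hF : Continuous F) (w : κ → ℝ) :
    ∫ τ in a..b, F τ *ᵥ w = (∫ τ in a..b, F τ) *ᵥ w :=
  (LinearMap.toContinuousLinearMap ((mulVecBilin ℝ ℝ).flip w)).intervalIntegral_comp_comm
    (hF.intervalIntegrable a b)

end Matrix

section Gramian

variable {ι κ : Type*} [Fintype ι] [Fintype κ] {Φ : ℝ → Matrix ι κ ℝ} {a b : ℝ}

theorem intervalIntegral_mulVec_transpose_mulVec (hΦ : Continuous Φ) (v : ι → ℝ) :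
    ∫ τ in a..b, Φ τ *ᵥ ((Φ τ)ᵀ *ᵥ v) = (∫ τ in a..b, Φ τ * (Φ τ)ᵀ) *ᵥ v := by
  simp_rw [mulVec_mulVec]
  exact intervalIntegral_mulVec (hΦ.matrix_mul hΦ.matrix_transpose) v

theorem intervalIntegral_dotProduct_transpose_mulVec (hΦ : Continuous Φ) (v : ι → ℝ) :
    ∫ τ in a..b, (Φ τ)ᵀ *ᵥ v ⬝ᵥ (Φ τ)ᵀ *ᵥ v = v ⬝ᵥ (∫ τ in a..b, Φ τ * (Φ τ)ᵀ) *ᵥ v := by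
  rw [← intervalIntegral_dotProduct_mulVec (hΦ.matrix_mul hΦ.matrix_transpose)]
  simp_rw [← mulVec_mulVec, dotProduct_mulVec, mulVec_transpose]

end Gramian

theorem state_lies_on_energy_ellipsoid_general
    (n m : ℕ) (A : Matrix (Fin n) (Fin n) ℝ) (B : Matrix (Fin n) (Fin m) ℝ)
    (t₀ : ℝ)
    (g : ℝ → Fin n → ℝ)
    (W : ℝ → Matrix (Fin n) (Fin n) ℝ)
    (hW : ∀ t, W t = ∫ τ in t₀..t,
        NormedSpace.exp ((t - τ) • A) * B * Bᵀ * NormedSpace.exp ((t - τ) • Aᵀ))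
    (tf : ℝ)
    (xf : Fin n → ℝ)
    (ustar : ℝ → Fin m → ℝ)
    (hustar : ∀ t, ustar t = Bᵀ.mulVec ((NormedSpace.exp ((tf - t) • Aᵀ)).mulVec
        ((W tf)⁻¹.mulVec (xf - g tf))))
    (x : ℝ → Fin n → ℝ)
    (hx : ∀ t, x t = g t
        + ∫ τ in t₀..t, (NormedSpace.exp ((t - τ) • A)).mulVec (B.mulVec (ustar τ)))
    (E : ℝ → ℝ)
    (hE : ∀ t, E t = ∫ s in t₀..t, ∑ k, (ustar s k) ^ 2) :
    ∀ t ∈ Set.Ioc t₀ tf, IsUnit (W t).det →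
      (x t - g t) ⬝ᵥ (W t)⁻¹.mulVec (x t - g t) = E t := by
  intro t _ hWt
  set Φ : ℝ → Matrix (Fin n) (Fin m) ℝ := fun τ => NormedSpace.exp ((t - τ) • A) * B
  have hΦ : Continuous Φ :=
    ((continuous_exp_smul A).comp (continuous_const.sub continuous_id)).matrix_mul
      continuous_const
  obtain ⟨v, hv⟩ : ∃ v, v = NormedSpace.exp ((tf - t) • Aᵀ) *ᵥ (W tf)⁻¹ *ᵥ (xf - g tf) :=
    ⟨_, rfl⟩
  have hu (τ : ℝ) : ustar τ = (Φ τ)ᵀ *ᵥ v := by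
    rw [hustar, show tf - τ = (t - τ) + (tf - t) by ring, exp_add_smul, ← mulVec_mulVec, ← hv,
      mulVec_mulVec, exp_smul_transpose, ← transpose_mul]
  have hWt_eq : W t = ∫ τ in t₀..t, Φ τ * (Φ τ)ᵀ := by
    simp only [hW, Φ, transpose_mul, exp_smul_transpose, Matrix.mul_assoc]
  have hxg : x t - g t = W t *ᵥ v := by
    simp only [hx, add_sub_cancel_left, mulVec_mulVec _ _ B, hu]
    rw [hWt_eq, ← intervalIntegral_mulVec_transpose_mulVec hΦ]
  have hEt : E t = v ⬝ᵥ W t *ᵥ v := by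
    rw [hE, hWt_eq, ← intervalIntegral_dotProduct_transpose_mulVec hΦ]
    simp only [hu, dotProduct, sq]
  rw [hxg, hEt, mulVec_mulVec, nonsing_inv_mul _ hWt, one_mulVec, dotProduct_comm]

/-- Under the minimum-energy control
`u*(t) = Bᵀ e^{Aᵀ(t_f−t)} W(t_f)⁻¹ (x_f − g(t_f))` with trajectory
`x(t) = g(t) + ∫_{t₀}^{t} e^{A(t−τ)} B u*(τ) dτ` and cumulative energy
`E(t) = ∫_{t₀}^{t} ‖u*(s)‖² ds`, for every intermediate time `t ∈ (t₀, t_f]` at which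
`W(t)` is invertible, the state lies on the time-varying energy hyper-ellipsoid:
`(x(t) − g(t))ᵀ W(t)⁻¹ (x(t) − g(t)) = E(t)`. -/
theorem state_lies_on_energy_ellipsoid
    (n m : ℕ) (A : Matrix (Fin n) (Fin n) ℝ) (B : Matrix (Fin n) (Fin m) ℝ)
    (f x₀ : Fin n → ℝ) (t₀ : ℝ)
    (g : ℝ → Fin n → ℝ)
    (hg : ∀ t, g t = (NormedSpace.exp ((t - t₀) • A)).mulVec x₀
        + ∫ τ in t₀..t, (NormedSpace.exp ((t - τ) • A)).mulVec f)
    (W : ℝ → Matrix (Fin n) (Fin n) ℝ)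
    (hW : ∀ t, W t = ∫ τ in t₀..t,
        NormedSpace.exp ((t - τ) • A) * B * Bᵀ * NormedSpace.exp ((t - τ) • Aᵀ))
    (tf : ℝ) (htf : t₀ < tf)
    (hinv : IsUnit (W tf).det)
    (xf : Fin n → ℝ)
    (ustar : ℝ → Fin m → ℝ)
    (hustar : ∀ t, ustar t = Bᵀ.mulVec ((NormedSpace.exp ((tf - t) • Aᵀ)).mulVec
        ((W tf)⁻¹.mulVec (xf - g tf))))
    (x : ℝ → Fin n → ℝ)
    (hx : ∀ t, x t = g t
        + ∫ τ in t₀..t, (NormedSpace.exp ((t - τ) • A)).mulVec (B.mulVec (ustar τ)))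
    (E : ℝ → ℝ)
    (hE : ∀ t, E t = ∫ s in t₀..t, ∑ k, (ustar s k) ^ 2) :
    ∀ t ∈ Set.Ioc t₀ tf, IsUnit (W t).det →
      (x t - g t) ⬝ᵥ (W t)⁻¹.mulVec (x t - g t) = E t :=
  state_lies_on_energy_ellipsoid_general n m A B t₀ g W hW tf xf ustar hustar x hx E hE
end

section
/- Let t_f > t₀, suppose the controllability Gramian W(t_f) is invertible, and let E ≥ 0. A point x_f ∈ ℝⁿ satisfies (x_f − g(t_f))ᵀ W(t_f)⁻¹ (x_f − g(t_f)) ≤ E if and only if there exists a continuous control u : [t₀, t_f] → ℝᵐ with energy ∫_{t₀}^{t_f} ‖u(t)‖² dt ≤ E whose controlled trajectory x(t) = g(t) + ∫_{t₀}^{t} e^{A(t−τ)} B u(τ) dτ satisfies x(t_f) = x_f. That is, the set of states reachable at time t_f with energy at most E is exactly the solid hyper-ellipsoid centered at g(t_f) determined by W(t_f) and E. -/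
open Matrix MeasureTheory

attribute [local instance] Matrix.normedAddCommGroup Matrix.normedSpace

/-!
Put `Φ τ = e^{(t_f - τ) A} B` and `z = x_f - g(t_f)`. A control `u` steers the system to `x_f`
exactly when `∫ Φ u = z`, and `W(t_f) = ∫ Φ Φᵀ`. The control `v = Φᵀ W⁻¹ z` does so with energy
`∫ ⟪v, v⟫ = zᵀ W⁻¹ z`. For any other continuous control `u` with `∫ Φ u = z` the cross term
`∫ ⟪v, u⟫` equals `zᵀ W⁻¹ z` as well, so `0 ≤ ∫ ‖u - v‖²` gives `∫ ‖u‖² ≥ zᵀ W⁻¹ z`.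
-/

theorem Matrix.continuous_exp_smul_s11 {ι : Type*} [Fintype ι] [DecidableEq ι]
    (A : Matrix ι ι ℝ) : Continuous fun t : ℝ => NormedSpace.exp (t • A) := by
  -- `exp` needs a normed ring; the operator norm induces the same topology on matrices.
  open scoped Norms.Operator in
  exact NormedSpace.exp_continuous.comp (continuous_id.smul continuous_const)

section MinimumEnergy

variable {ι κ : Type*} [Fintype ι] [Fintype κ] {a b : ℝ}

theorem intervalIntegral.integral_mulVec {M : ℝ → Matrix ι κ ℝ} (hM : Continuous M) (w : κ → ℝ) :
    ∫ τ in a..b, M τ *ᵥ w = (∫ τ in a..b, M τ) *ᵥ w :=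
  (LinearMap.toContinuousLinearMap ((mulVecBilin ℝ ℝ).flip w)).intervalIntegral_comp_comm
    (hM.intervalIntegrable a b)

theorem intervalIntegral.integral_dotProduct {φ : ℝ → ι → ℝ} (hφ : IntervalIntegrable φ volume a b)
    (w : ι → ℝ) : ∫ τ in a..b, w ⬝ᵥ φ τ = w ⬝ᵥ ∫ τ in a..b, φ τ :=
  (LinearMap.toContinuousLinearMap (dotProductBilin ℝ ℝ w)).intervalIntegral_comp_comm hφ

theorem two_mul_integral_dotProduct_sub_le (hab : a ≤ b) {u v : ℝ → κ → ℝ}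
    (hu : Continuous u) (hv : Continuous v) :
    2 * (∫ τ in a..b, v τ ⬝ᵥ u τ) - ∫ τ in a..b, v τ ⬝ᵥ v τ ≤ ∫ τ in a..b, u τ ⬝ᵥ u τ := by
  have hvu : Continuous fun τ => 2 * (v τ ⬝ᵥ u τ) := continuous_const.mul (hv.dotProduct hu)
  have hvv : Continuous fun τ => v τ ⬝ᵥ v τ := hv.dotProduct hv
  rw [← intervalIntegral.integral_const_mul,
    ← intervalIntegral.integral_sub (hvu.intervalIntegrable a b) (hvv.intervalIntegrable a b)]
  refine intervalIntegral.integral_mono_on hab ((hvu.sub hvv).intervalIntegrable a b)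
    ((hu.dotProduct hu).intervalIntegrable a b) fun τ _ => ?_
  have hsq := dotProduct_self_star_nonneg (u τ - v τ)
  simp only [star_trivial, sub_dotProduct, dotProduct_sub, dotProduct_comm (u τ) (v τ)] at hsq
  linarith

noncomputable def gramian (Φ : ℝ → Matrix ι κ ℝ) (a b : ℝ) : Matrix ι ι ℝ :=
  ∫ τ in a..b, Φ τ * (Φ τ)ᵀ

noncomputable def minEnergyControl [DecidableEq ι] (Φ : ℝ → Matrix ι κ ℝ) (a b : ℝ)
    (z : ι → ℝ) (τ : ℝ) : κ → ℝ :=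
  (Φ τ)ᵀ *ᵥ ((gramian Φ a b)⁻¹ *ᵥ z)

variable {Φ : ℝ → Matrix ι κ ℝ}

theorem continuous_minEnergyControl [DecidableEq ι] (hΦ : Continuous Φ) (a b : ℝ) (z : ι → ℝ) :
    Continuous (minEnergyControl Φ a b z) :=
  hΦ.matrix_transpose.matrix_mulVec continuous_const

theorem integral_mulVec_transpose_mulVec (hΦ : Continuous Φ) (w : ι → ℝ) :
    ∫ τ in a..b, Φ τ *ᵥ ((Φ τ)ᵀ *ᵥ w) = gramian Φ a b *ᵥ w := by
  simp_rw [mulVec_mulVec]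
  exact intervalIntegral.integral_mulVec (hΦ.matrix_mul hΦ.matrix_transpose) w

theorem integral_transpose_mulVec_dotProduct (hΦ : Continuous Φ) {u : ℝ → κ → ℝ}
    (hu : Continuous u) (w : ι → ℝ) :
    ∫ τ in a..b, ((Φ τ)ᵀ *ᵥ w) ⬝ᵥ u τ = w ⬝ᵥ ∫ τ in a..b, Φ τ *ᵥ u τ := by
  simp_rw [← intervalIntegral.integral_dotProduct ((hΦ.matrix_mulVec hu).intervalIntegrable a b),
    mulVec_transpose, dotProduct_mulVec]

variable [DecidableEq ι]

theorem integral_mulVec_minEnergyControl (hΦ : Continuous Φ) (hW : IsUnit (gramian Φ a b).det)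
    (z : ι → ℝ) : ∫ τ in a..b, Φ τ *ᵥ minEnergyControl Φ a b z τ = z := by
  simp only [minEnergyControl]
  rw [integral_mulVec_transpose_mulVec hΦ, mulVec_mulVec, mul_nonsing_inv _ hW, one_mulVec]

theorem integral_minEnergyControl_dotProduct (hΦ : Continuous Φ) {u : ℝ → κ → ℝ}
    (hu : Continuous u) (z : ι → ℝ) :
    ∫ τ in a..b, minEnergyControl Φ a b z τ ⬝ᵥ u τ =
      (∫ τ in a..b, Φ τ *ᵥ u τ) ⬝ᵥ (gramian Φ a b)⁻¹ *ᵥ z := by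
  rw [dotProduct_comm]
  exact integral_transpose_mulVec_dotProduct hΦ hu _

theorem integral_minEnergyControl_energy (hΦ : Continuous Φ) (hW : IsUnit (gramian Φ a b).det)
    (z : ι → ℝ) :
    ∫ τ in a..b, minEnergyControl Φ a b z τ ⬝ᵥ minEnergyControl Φ a b z τ =
      z ⬝ᵥ (gramian Φ a b)⁻¹ *ᵥ z := by
  rw [integral_minEnergyControl_dotProduct hΦ (continuous_minEnergyControl hΦ a b z),
    integral_mulVec_minEnergyControl hΦ hW]

theorem dotProduct_gramian_inv_mulVec_le_energy (hΦ : Continuous Φ) (hab : a ≤ b)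
    (hW : IsUnit (gramian Φ a b).det) {u : ℝ → κ → ℝ} (hu : Continuous u) {z : ι → ℝ}
    (hz : ∫ τ in a..b, Φ τ *ᵥ u τ = z) :
    z ⬝ᵥ (gramian Φ a b)⁻¹ *ᵥ z ≤ ∫ τ in a..b, u τ ⬝ᵥ u τ := by
  have hsq := two_mul_integral_dotProduct_sub_le hab hu (continuous_minEnergyControl hΦ a b z)
  rw [integral_minEnergyControl_dotProduct hΦ hu, hz,
    integral_minEnergyControl_energy hΦ hW] at hsq
  linarith

theorem dotProduct_gramian_inv_mulVec_le_iff_exists_control (hΦ : Continuous Φ) (hab : a ≤ b)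
    (hW : IsUnit (gramian Φ a b).det) (z : ι → ℝ) (E : ℝ) :
    z ⬝ᵥ (gramian Φ a b)⁻¹ *ᵥ z ≤ E ↔ ∃ u : ℝ → κ → ℝ, Continuous u ∧
      (∫ τ in a..b, u τ ⬝ᵥ u τ) ≤ E ∧ ∫ τ in a..b, Φ τ *ᵥ u τ = z := by
  constructor
  · intro hE
    exact ⟨_, continuous_minEnergyControl hΦ a b z,
      (integral_minEnergyControl_energy hΦ hW z).trans_le hE,
      integral_mulVec_minEnergyControl hΦ hW z⟩
  · rintro ⟨u, hu, hE, hz⟩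
    exact (dotProduct_gramian_inv_mulVec_le_energy hΦ hab hW hu hz).trans hE

end MinimumEnergy

theorem reachable_set_eq_energy_ellipsoid_general
    (n m : ℕ) (A : Matrix (Fin n) (Fin n) ℝ) (B : Matrix (Fin n) (Fin m) ℝ)
    (t₀ : ℝ)
    (g : ℝ → Fin n → ℝ)
    (W : ℝ → Matrix (Fin n) (Fin n) ℝ)
    (hW : ∀ t, W t = ∫ τ in t₀..t,
        NormedSpace.exp ((t - τ) • A) * B * Bᵀ * NormedSpace.exp ((t - τ) • Aᵀ))
    (tf : ℝ) (htf : t₀ < tf)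
    (hinv : IsUnit (W tf).det)
    (E : ℝ)
    (xf : Fin n → ℝ) :
    ((xf - g tf) ⬝ᵥ (W tf)⁻¹.mulVec (xf - g tf) ≤ E) ↔
      ∃ u : ℝ → Fin m → ℝ, Continuous u ∧
        (∫ t in t₀..tf, ∑ k, (u t k) ^ 2) ≤ E ∧
        g tf + (∫ τ in t₀..tf,
          (NormedSpace.exp ((tf - τ) • A)).mulVec (B.mulVec (u τ))) = xf := by
  set Φ : ℝ → Matrix (Fin n) (Fin m) ℝ := fun τ => NormedSpace.exp ((tf - τ) • A) * B
  have hΦ : Continuous Φ :=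
    ((continuous_exp_smul_s11 A).comp (continuous_const.sub continuous_id)).matrix_mul continuous_const
  have hWΦ : W tf = gramian Φ t₀ tf := by
    simp only [hW, gramian, Φ, transpose_mul, ← exp_transpose, transpose_smul, Matrix.mul_assoc]
  have henergy (u : ℝ → Fin m → ℝ) :
      (∫ t in t₀..tf, ∑ k, u t k ^ 2) = ∫ t in t₀..tf, u t ⬝ᵥ u t := by
    simp only [dotProduct, sq]
  rw [hWΦ] at hinv ⊢
  simp_rw [henergy, mulVec_mulVec, ← eq_sub_iff_add_eq']
  exact dotProduct_gramian_inv_mulVec_le_iff_exists_control hΦ htf.le hinv (xf - g tf) E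

/-- If `t_f > t₀`, `W(t_f)` is invertible and `E ≥ 0`, then a point
`x_f ∈ ℝⁿ` satisfies `(x_f − g(t_f))ᵀ W(t_f)⁻¹ (x_f − g(t_f)) ≤ E` if and only if there
exists a continuous control `u` with energy `∫_{t₀}^{t_f} ‖u(t)‖² dt ≤ E` whose controlled
trajectory `x(t) = g(t) + ∫_{t₀}^{t} e^{A(t−τ)} B u(τ) dτ` satisfies `x(t_f) = x_f`;
i.e. the set of states reachable at `t_f` with energy at most `E` is exactly the solid
hyper-ellipsoid centered at `g(t_f)` determined by `W(t_f)` and `E`. -/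
theorem reachable_set_eq_energy_ellipsoid
    (n m : ℕ) (A : Matrix (Fin n) (Fin n) ℝ) (B : Matrix (Fin n) (Fin m) ℝ)
    (f x₀ : Fin n → ℝ) (t₀ : ℝ)
    (g : ℝ → Fin n → ℝ)
    (hg : ∀ t, g t = (NormedSpace.exp ((t - t₀) • A)).mulVec x₀
        + ∫ τ in t₀..t, (NormedSpace.exp ((t - τ) • A)).mulVec f)
    (W : ℝ → Matrix (Fin n) (Fin n) ℝ)
    (hW : ∀ t, W t = ∫ τ in t₀..t,
        NormedSpace.exp ((t - τ) • A) * B * Bᵀ * NormedSpace.exp ((t - τ) • Aᵀ))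
    (tf : ℝ) (htf : t₀ < tf)
    (hinv : IsUnit (W tf).det)
    (E : ℝ) (hE : 0 ≤ E)
    (xf : Fin n → ℝ) :
    ((xf - g tf) ⬝ᵥ (W tf)⁻¹.mulVec (xf - g tf) ≤ E) ↔
      ∃ u : ℝ → Fin m → ℝ, Continuous u ∧
        (∫ t in t₀..tf, ∑ k, (u t k) ^ 2) ≤ E ∧
        g tf + (∫ τ in t₀..tf,
          (NormedSpace.exp ((tf - τ) • A)).mulVec (B.mulVec (u τ))) = xf :=
  reachable_set_eq_energy_ellipsoid_general n m A B t₀ g W hW tf htf hinv E xf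
end
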